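/- Let G be a chordal graph and x a vertex such that the induced subgraph on {x} ∪ N(x) is complete, with N(x) = {y_1,...,y_t}. Then for every d, I(G)^∨_[d] = y_1···y_t · I(H_2)^∨_[d−t] + x · I(H_1)^∨_[d−1], where H_1 = G \ {x} and H_2 = G \ (N(x) ∪ {x}). -/

import Mathlib

/-!
A vertex cover `S` of `G` either contains `x`, and then `S \ {x}` covers `G \ {x}`, or it misses
`x`, and then it contains every neighbour of `x`, so that `S \ N(x)` covers `G \ N[x]`.
Conversely, adding `x` to a cover of `G \ {x}`, or `N(x)` to a cover of `G \ N[x]`, gives a cover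
of `G`. Since a squarefree monomial lies in `I(G)^∨` exactly when its support is a vertex cover,
this case split is the claimed decomposition of `I(G)^∨_[d]`.
-/

open MvPolynomial

section Defs

variable (k : Type*) [Field k] (σ : Type*)

/-- A set of vertices is a vertex cover if it meets every edge. -/
def SimpleGraph.IsVertexCover' {V : Type*} (G : SimpleGraph V) (S : Set V) : Prop :=
  ∀ ⦃x y : V⦄, G.Adj x y → x ∈ S ∨ y ∈ S

/-- A minimal vertex cover: a vertex cover no proper subset of which is a cover. -/
def SimpleGraph.IsMinimalVertexCover {V : Type*} (G : SimpleGraph V) (S : Set V) : Prop :=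
  G.IsVertexCover' S ∧ ∀ T ⊆ S, G.IsVertexCover' T → T = S

/-- A graph is chordal if every cycle of length `> 3` has a chord. -/
def SimpleGraph.IsChordal {V : Type*} (G : SimpleGraph V) : Prop :=
  ∀ ⦃v : V⦄ (w : G.Walk v v), w.IsCycle → 3 < w.length →
    ∃ x y : V, x ∈ w.support ∧ y ∈ w.support ∧ G.Adj x y ∧ s(x, y) ∉ w.edges

/-- Delete a set of vertices (keep the same vertex type, remove all incident edges). -/
def SimpleGraph.deleteVerts' {V : Type*} (G : SimpleGraph V) (S : Set V) : SimpleGraph V where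
  Adj a b := G.Adj a b ∧ a ∉ S ∧ b ∉ S
  symm := ⟨fun _ _ h => ⟨h.1.symm, h.2.2, h.2.1⟩⟩
  loopless := ⟨fun a h => G.loopless.irrefl a h.1⟩

/-- The edge ideal of a graph. -/
noncomputable def edgeIdeal {V : Type*} (G : SimpleGraph V) : Ideal (MvPolynomial V k) :=
  Ideal.span {m | ∃ i j : V, G.Adj i j ∧ m = X i * X j}

/-- The squarefree Alexander dual of the edge ideal:
the intersection of the primes `(x_i, x_j)` over the edges of `G`. -/
noncomputable def alexanderDual {V : Type*} (G : SimpleGraph V) : Ideal (MvPolynomial V k) :=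
  ⨅ (i : V) (j : V) (_ : G.Adj i j), Ideal.span {X i, X j}

/-- `I_[d]`: the ideal generated by the squarefree monomials of degree `d` lying in `I`. -/
noncomputable def sqfreeComponent {V : Type*} (I : Ideal (MvPolynomial V k)) (d : ℕ) :
    Ideal (MvPolynomial V k) :=
  Ideal.span {m | ∃ S : Finset V, S.card = d ∧ (∏ i ∈ S, X i) ∈ I ∧ m = ∏ i ∈ S, (X i : MvPolynomial V k)}

/-- `(I_d)`: the ideal generated by the homogeneous degree-`d` elements of `I`. -/
noncomputable def degreeComponent {V : Type*} (I : Ideal (MvPolynomial V k)) (d : ℕ) :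
    Ideal (MvPolynomial V k) :=
  Ideal.span ((I : Set (MvPolynomial V k)) ∩ (homogeneousSubmodule V k d : Set (MvPolynomial V k)))

/-- `I` has a linear resolution in degree `d`: there is a (necessarily minimal) graded free
resolution of `I` whose `i`-th free module is generated in degree `d + i`; equivalently all the
matrix entries of the differentials are homogeneous of degree `1`, so that
`β_{i,j}(I) = 0` for `j ≠ i + d`. -/
def HasLinearResolution {V : Type*} (d : ℕ) (I : Ideal (MvPolynomial V k)) : Prop :=
  ∃ (b : ℕ → ℕ)
    (g : (Fin (b 0) →₀ MvPolynomial V k) →ₗ[MvPolynomial V k] MvPolynomial V k)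
    (f : ∀ i : ℕ, (Fin (b (i+1)) →₀ MvPolynomial V k) →ₗ[MvPolynomial V k]
        (Fin (b i) →₀ MvPolynomial V k)),
    (∀ j, g (Finsupp.single j 1) ∈ homogeneousSubmodule V k d) ∧
    LinearMap.range g = I ∧
    (∀ i j l, (f i (Finsupp.single j 1)) l ∈ homogeneousSubmodule V k 1) ∧
    LinearMap.ker g = LinearMap.range (f 0) ∧
    (∀ i, LinearMap.ker (f i) = LinearMap.range (f (i+1)))

/-- A homogeneous ideal is componentwise linear if each `(I_d)` has a linear resolution. -/
def ComponentwiseLinear {V : Type*} (I : Ideal (MvPolynomial V k)) : Prop :=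
  ∀ d : ℕ, HasLinearResolution k d (degreeComponent k I d)

/-- A monomial ideal has linear quotients if its minimal generators can be listed with
nondecreasing degrees so that each successive colon ideal is generated by variables. -/
def HasLinearQuotients {V : Type*} (I : Ideal (MvPolynomial V k)) : Prop :=
  ∃ (m : ℕ) (u : Fin m → MvPolynomial V k),
    (∀ i, ∃ s : V →₀ ℕ, u i = monomial s (1 : k)) ∧
    I = Ideal.span (Set.range u) ∧
    (∀ i j : Fin m, i ≤ j → (u i).totalDegree ≤ (u j).totalDegree) ∧
    (∀ i : Fin m, 0 < (i : ℕ) →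
      ∃ s : Set V,
        Submodule.colon (Ideal.span (u '' {j | j < i})) (Ideal.span {u i})
          = Ideal.span (MvPolynomial.X '' s))

/-- The irrelevant (graded) maximal ideal of the polynomial ring. -/
noncomputable def maxIdeal : Ideal (MvPolynomial σ k) :=
  Ideal.span (Set.range (X : σ → MvPolynomial σ k))

/-- `rs` is an `M`-regular sequence: each term is a nonzerodivisor modulo the previous ones,
and the sequence does not generate everything. -/
def IsRegularSeq (R M : Type*) [CommRing R] [AddCommGroup M] [Module R M]
    (rs : List R) : Prop :=
  (∀ (i : ℕ) (h : i < rs.length) (x : M),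
      rs.get ⟨i, h⟩ • x ∈ (Ideal.span {r | r ∈ rs.take i}) • (⊤ : Submodule R M) →
        x ∈ (Ideal.span {r | r ∈ rs.take i}) • (⊤ : Submodule R M)) ∧
  (Ideal.span {r | r ∈ rs}) • (⊤ : Submodule R M) ≠ ⊤

/-- The depth of `M` with respect to the ideal `m`: the supremum of the lengths of
`M`-regular sequences with entries in `m`. -/
noncomputable def moduleDepth (R M : Type*) [CommRing R] [AddCommGroup M] [Module R M]
    (m : Ideal R) : ℕ :=
  sSup {d : ℕ | ∃ rs : List R, rs.length = d ∧ (∀ r ∈ rs, r ∈ m) ∧ IsRegularSeq R M rs}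

/-- The Krull dimension of a module: the dimension of `R` modulo the annihilator. -/
noncomputable def moduleDim (R M : Type*) [CommRing R] [AddCommGroup M] [Module R M] :
    WithBot (WithTop ℕ) :=
  ringKrullDim (R ⧸ Module.annihilator R M)

/-- `M` is a (nonzero) Cohen-Macaulay module: depth equals Krull dimension. -/
def IsCMModule (R M : Type*) [CommRing R] [AddCommGroup M] [Module R M] (m : Ideal R) : Prop :=
  Nontrivial M ∧ (moduleDepth R M m : WithBot (WithTop ℕ)) = moduleDim R M

/-- `R/I` is Cohen-Macaulay. -/
def QuotientIsCM {V : Type*} (I : Ideal (MvPolynomial V k)) : Prop :=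
  (moduleDepth (MvPolynomial V k) (MvPolynomial V k ⧸ I) (maxIdeal k V) : WithBot (WithTop ℕ))
    = ringKrullDim (MvPolynomial V k ⧸ I)

/-- `R/I` is sequentially Cohen-Macaulay: there is a filtration
`0 = M₀ ⊂ M₁ ⊂ ⋯ ⊂ M_r = R/I` whose successive quotients are Cohen-Macaulay of strictly
increasing Krull dimension. -/
def SequentiallyCM {V : Type*} (I : Ideal (MvPolynomial V k)) : Prop :=
  ∃ (r : ℕ) (N : Fin (r+1) → Submodule (MvPolynomial V k) (MvPolynomial V k ⧸ I)),
    Monotone N ∧ N 0 = ⊥ ∧ N (Fin.last r) = ⊤ ∧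
    (∀ i : Fin r,
      IsCMModule (MvPolynomial V k)
        (N i.succ ⧸ Submodule.comap (N i.succ).subtype (N i.castSucc)) (maxIdeal k V)) ∧
    StrictMono (fun i : Fin r =>
      moduleDim (MvPolynomial V k)
        (N i.succ ⧸ Submodule.comap (N i.succ).subtype (N i.castSucc)))

/-- `I` is a squarefree monomial ideal. -/
def IsSquarefreeMonomialIdeal {V : Type*} (I : Ideal (MvPolynomial V k)) : Prop :=
  ∃ F : Set (Finset V), I = Ideal.span {m | ∃ S ∈ F, m = ∏ i ∈ S, (X i : MvPolynomial V k)}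

/-- `I` is unmixed: all its minimal primes have the same height (equivalently, here,
the same codimension/coheight). -/
def IsUnmixed {R : Type*} [CommRing R] (I : Ideal R) : Prop :=
  ∀ P ∈ I.minimalPrimes, ∀ Q ∈ I.minimalPrimes,
    ringKrullDim (R ⧸ P) = ringKrullDim (R ⧸ Q)

/-- The cycle graph on `ZMod n`. -/
def cycleGraph (n : ℕ) : SimpleGraph (ZMod n) :=
  SimpleGraph.fromEdgeSet {e | ∃ i : ZMod n, e = s(i, i + 1)}

end Defs

theorem MvPolynomial.prod_X_mem_span_X_image_iff {σ R : Type*} [CommSemiring R] [Nontrivial R]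
    {S : Finset σ} {s : Set σ} :
    ∏ i ∈ S, (X i : MvPolynomial σ R) ∈ Ideal.span (X '' s) ↔ ∃ i ∈ S, i ∈ s := by
  classical
  have hmonomial : ∏ i ∈ S, (X i : MvPolynomial σ R) =
      monomial (∑ i ∈ S, Finsupp.single i 1) 1 :=
    (monomial_sum_one S _).symm
  rw [hmonomial, mem_ideal_span_X_image, support_monomial, if_neg one_ne_zero]
  simp [Finsupp.finsetSum_apply, Finsupp.single_apply, and_comm]

namespace SimpleGraph

variable {V : Type*} {G : SimpleGraph V} {S T W : Set V}

theorem IsVertexCover'.neighborSet_subset (hS : G.IsVertexCover' S) {x : V} (hx : x ∉ S) :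
    G.neighborSet x ⊆ S :=
  fun _ hv => (hS hv).resolve_left hx

theorem IsVertexCover'.diff_deleteVerts' (hS : G.IsVertexCover' S) (W : Set V) :
    (G.deleteVerts' W).IsVertexCover' (S \ W) :=
  fun _ _ ⟨hab, ha, hb⟩ => (hS hab).imp (⟨·, ha⟩) (⟨·, hb⟩)

theorem IsVertexCover'.union_of_deleteVerts' (hS : (G.deleteVerts' W).IsVertexCover' S)
    (hWT : ∀ v ∈ W \ T, G.neighborSet v ⊆ T) : G.IsVertexCover' (T ∪ S) := by
  have hW : ∀ ⦃a b⦄, G.Adj a b → a ∈ W → a ∈ T ∨ b ∈ T := fun a b hab ha =>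
    (em (a ∈ T)).imp id fun haT => hWT a ⟨ha, haT⟩ hab
  intro a b hab
  by_cases ha : a ∈ W
  · exact (hW hab ha).imp Or.inl Or.inl
  by_cases hb : b ∈ W
  · exact ((hW hab.symm hb).imp Or.inl Or.inl).symm
  exact (hS ⟨hab, ha, hb⟩).imp Or.inr Or.inr

end SimpleGraph

section CoverIdeal

variable {k : Type*} [Field k] {V : Type*}

variable (k) in
/-- `I(H)^∨_[e]` for the graph `H` on the vertex set `U`: only covers inside `U` are counted. -/
noncomputable def coverIdealComponent (H : SimpleGraph V) (U : Set V) (e : ℕ) :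
    Ideal (MvPolynomial V k) :=
  Ideal.span {m | ∃ S : Finset V, (↑S : Set V) ⊆ U ∧ S.card = e ∧ H.IsVertexCover' ↑S ∧
    m = ∏ i ∈ S, (X i : MvPolynomial V k)}

theorem prod_X_mem_alexanderDual_iff (G : SimpleGraph V) (S : Finset V) :
    ∏ i ∈ S, (X i : MvPolynomial V k) ∈ alexanderDual k G ↔ G.IsVertexCover' ↑S := by
  classical
  simp [alexanderDual, ← Set.image_pair, prod_X_mem_span_X_image_iff, SimpleGraph.IsVertexCover',
    and_or_left, exists_or]

variable [DecidableEq V] (G : SimpleGraph V) {S T : Finset V} {W : Set V}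

theorem prod_X_mem_span_prod_mul_coverIdealComponent (hS : G.IsVertexCover' ↑S)
    (hSW : ↑S ∩ W = ↑T) :
    ∏ i ∈ S, (X i : MvPolynomial V k) ∈
      Ideal.span {∏ i ∈ T, X i} * coverIdealComponent k (G.deleteVerts' W) Wᶜ (S.card - T.card) := by
  have hTS : T ⊆ S := by
    rw [← Finset.coe_subset, ← hSW]
    exact Set.inter_subset_left
  have hdiff : (↑(S \ T) : Set V) = ↑S \ W := by
    rw [Finset.coe_sdiff, ← hSW, Set.sdiff_self_inter]
  rw [← Finset.prod_sdiff hTS, mul_comm _ (∏ i ∈ T, _), ← Finset.card_sdiff_of_subset hTS]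
  refine Ideal.mul_mem_mul (Ideal.mem_span_singleton_self _) (Ideal.subset_span ?_)
  refine ⟨S \ T, ?_, rfl, ?_, rfl⟩
  · rw [hdiff]
    exact Set.sdiff_subset_compl _ _
  · rw [hdiff]
    exact hS.diff_deleteVerts' W

theorem span_prod_mul_coverIdealComponent_le (hTW : ↑T ⊆ W)
    (hWT : ∀ v ∈ W \ ↑T, G.neighborSet v ⊆ ↑T) (e : ℕ) :
    Ideal.span {∏ i ∈ T, X i} * coverIdealComponent k (G.deleteVerts' W) Wᶜ e ≤
      sqfreeComponent k (alexanderDual k G) (T.card + e) := by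
  rw [coverIdealComponent, Ideal.span_mul_span', Ideal.span_le]
  rintro _ ⟨_, rfl, _, ⟨S, hSW, rfl, hS, rfl⟩, rfl⟩
  have hdisj : Disjoint T S :=
    Finset.disjoint_coe.1 (Set.disjoint_of_subset hTW hSW disjoint_compl_right)
  dsimp only
  rw [← Finset.prod_union hdisj]
  refine Ideal.subset_span ⟨T ∪ S, Finset.card_union_of_disjoint hdisj, ?_, rfl⟩
  rw [prod_X_mem_alexanderDual_iff, Finset.coe_union]
  exact hS.union_of_deleteVerts' hWT

variable {x : V} {Y : Finset V}

theorem sqfreeComponent_alexanderDual_le (hY : (↑Y : Set V) = G.neighborSet x) (d : ℕ) :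
    sqfreeComponent k (alexanderDual k G) d ≤
      Ideal.span {∏ i ∈ Y, X i} *
          coverIdealComponent k (G.deleteVerts' (insert x (G.neighborSet x)))
            (insert x (G.neighborSet x))ᶜ (d - Y.card) ⊔
        Ideal.span {X x} * coverIdealComponent k (G.deleteVerts' {x}) {x}ᶜ (d - 1) := by
  rw [sqfreeComponent, Ideal.span_le]
  rintro _ ⟨S, rfl, hS, rfl⟩
  rw [prod_X_mem_alexanderDual_iff] at hS
  by_cases hxS : x ∈ S
  · have hSx : (↑S : Set V) ∩ {x} = ↑({x} : Finset V) := by simpa using hxS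
    have hmem := prod_X_mem_span_prod_mul_coverIdealComponent (k := k) G hS hSx
    rw [Finset.prod_singleton, Finset.card_singleton] at hmem
    exact Ideal.mem_sup_right hmem
  · have hSY : (↑S : Set V) ∩ insert x (G.neighborSet x) = ↑Y := by
      rw [Set.inter_insert_of_notMem hxS, hY, Set.inter_eq_right]
      exact hS.neighborSet_subset hxS
    exact Ideal.mem_sup_left (prod_X_mem_span_prod_mul_coverIdealComponent G hS hSY)

theorem span_prod_neighborSet_mul_coverIdealComponent_le
    (hY : (↑Y : Set V) = G.neighborSet x) {d : ℕ} (hd : Y.card ≤ d) :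
    Ideal.span {∏ i ∈ Y, X i} *
        coverIdealComponent k (G.deleteVerts' (insert x (G.neighborSet x)))
          (insert x (G.neighborSet x))ᶜ (d - Y.card) ≤
      sqfreeComponent k (alexanderDual k G) d := by
  have hYx : ↑Y ⊆ insert x (G.neighborSet x) := hY ▸ Set.subset_insert _ _
  have hWY : ∀ v ∈ insert x (G.neighborSet x) \ ↑Y, G.neighborSet v ⊆ ↑Y := by
    rintro v ⟨hv, hvY⟩
    rw [hY] at hvY ⊢
    obtain rfl := hv.resolve_right hvY
    exact subset_rfl
  have hle := span_prod_mul_coverIdealComponent_le (k := k) G hYx hWY (d - Y.card)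
  rwa [Nat.add_sub_cancel' hd] at hle

/-- For `d = 0` the index `d - 1` truncates to `0`; then `x` is isolated (as `Y = ∅`), and the
empty cover of `G \ {x}` is a cover of `G`. -/
theorem span_X_mul_coverIdealComponent_le
    (hY : (↑Y : Set V) = G.neighborSet x) {d : ℕ} (hYd : Y.card ≤ d) :
    Ideal.span {X x} * coverIdealComponent k (G.deleteVerts' {x}) {x}ᶜ (d - 1) ≤
      sqfreeComponent k (alexanderDual k G) d := by
  rcases Nat.eq_zero_or_pos d with rfl | hd_pos
  · have hN : G.neighborSet x = ∅ := by
      rw [← hY, Finset.coe_eq_empty, ← Finset.card_eq_zero, Nat.le_zero.1 hYd]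
    have hle := span_prod_mul_coverIdealComponent_le (k := k) G (T := ∅) (W := {x})
      (by simp) (by rintro _ ⟨rfl, -⟩; simp [hN]) 0
    rw [Finset.prod_empty, Ideal.span_singleton_one, Ideal.top_mul] at hle
    exact Ideal.mul_le_right.trans hle
  · have hle := span_prod_mul_coverIdealComponent_le (k := k) G (T := {x}) (W := {x})
      (by simp) (by simp) (d - 1)
    rwa [Finset.prod_singleton, Finset.card_singleton, Nat.add_sub_cancel' hd_pos] at hle

end CoverIdeal

theorem dual_component_decomposition_general (k : Type*) [Field k] {V : Type*} (G : SimpleGraph V) (x : V)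
    (Y : Finset V) (hY : (↑Y : Set V) = G.neighborSet x)
    (t : ℕ) (ht : Y.card = t) (d : ℕ) (htd : t ≤ d) :
    sqfreeComponent k (alexanderDual k G) d =
      Ideal.span {∏ i ∈ Y, (X i : MvPolynomial V k)} *
        Ideal.span {m | ∃ S : Finset V,
          (↑S : Set V) ⊆ {v | v ∉ insert x (G.neighborSet x)} ∧ S.card = d - t ∧
          (G.deleteVerts' (insert x (G.neighborSet x))).IsVertexCover' ↑S ∧
          m = ∏ i ∈ S, (X i : MvPolynomial V k)} +
      Ideal.span {(X x : MvPolynomial V k)} *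
        Ideal.span {m | ∃ S : Finset V,
          (↑S : Set V) ⊆ {v | v ≠ x} ∧ S.card = d - 1 ∧
          (G.deleteVerts' {x}).IsVertexCover' ↑S ∧
          m = ∏ i ∈ S, (X i : MvPolynomial V k)} := by
  classical
  subst ht
  exact le_antisymm (sqfreeComponent_alexanderDual_le G hY d)
    (sup_le (span_prod_neighborSet_mul_coverIdealComponent_le G hY htd)
      (span_X_mul_coverIdealComponent_le G hY htd))

/-- decomposition of the squarefree components of the Alexander dual of a chordal
graph with respect to a vertex `x` with complete closed neighborhood:
`I(G)^∨_[d] = y_1⋯y_t · I(H₂)^∨_[d−t] + x · I(H₁)^∨_[d−1]`, where `H₁ = G \ {x}` and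
`H₂ = G \ (N(x) ∪ {x})`, the covers of the subgraphs being taken among their own vertices. -/
theorem dual_component_decomposition (k : Type*) [Field k] {V : Type*} [Fintype V]
    [DecidableEq V] (G : SimpleGraph V) (hG : G.IsChordal) (x : V)
    (hx : G.IsClique (insert x (G.neighborSet x)))
    (Y : Finset V) (hY : (↑Y : Set V) = G.neighborSet x)
    (t : ℕ) (ht : Y.card = t) (d : ℕ) (htd : t ≤ d) :
    sqfreeComponent k (alexanderDual k G) d =
      Ideal.span {∏ i ∈ Y, (X i : MvPolynomial V k)} *
        Ideal.span {m | ∃ S : Finset V,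
          (↑S : Set V) ⊆ {v | v ∉ insert x (G.neighborSet x)} ∧ S.card = d - t ∧
          (G.deleteVerts' (insert x (G.neighborSet x))).IsVertexCover' ↑S ∧
          m = ∏ i ∈ S, (X i : MvPolynomial V k)} +
      Ideal.span {(X x : MvPolynomial V k)} *
        Ideal.span {m | ∃ S : Finset V,
          (↑S : Set V) ⊆ {v | v ≠ x} ∧ S.card = d - 1 ∧
          (G.deleteVerts' {x}).IsVertexCover' ↑S ∧
          m = ∏ i ∈ S, (X i : MvPolynomial V k)} :=
  dual_component_decomposition_general k G x Y hY t ht d htd
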